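/- arXiv:1302.4641 — 3 statements merged into one kernel-verified Lean document; each statement's English description precedes it below -/
import Mathlib

section
/- Let X_V be a vector of binary variables with strictly positive joint probability, with Möbius parameter μ_U = P(X_U = 1_U). For disjoint nonempty proper subsets A, B of V, the random subvectors X_A and X_B are independent if and only if μ_{A'∪B'} = μ_{A'} · μ_{B'} for every A' ⊆ A and B' ⊆ B. -/
open Finset

open Classical in
/-- Probability of an event under a distribution `p` on a finite sample space. -/
noncomputable def Pr {Ω : Type*} [Fintype Ω] (p : Ω → ℝ) (φ : Ω → Prop) : ℝ :=
  ∑ x ∈ Finset.univ.filter (fun x => φ x), p x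

/-- Möbius parameter of a multivariate Bernoulli vector: `μ U = P(X_U = 1_U)`. -/
noncomputable def mob {V : Type*} [Fintype V] [DecidableEq V]
    (p : (V → Bool) → ℝ) (U : Finset V) : ℝ :=
  Pr p (fun x => ∀ v ∈ U, x v = true)

open Classical in
theorem Pr_eq {Ω : Type*} [Fintype Ω] (p : Ω → ℝ) (φ : Ω → Prop) :
    Pr p φ = ∑ x, if φ x then p x else 0 := by
  rw [Pr, Finset.sum_filter]

theorem Pr_congr {Ω : Type*} [Fintype Ω] (p : Ω → ℝ) {φ ψ : Ω → Prop}
    (h : ∀ x, φ x ↔ ψ x) : Pr p φ = Pr p ψ := by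
  classical
  rw [Pr_eq, Pr_eq]
  exact Finset.sum_congr rfl fun x _ => if_congr (h x) rfl rfl

theorem Pr_split {V : Type*} [Fintype V] [DecidableEq V] (p : (V → Bool) → ℝ)
    (φ : (V → Bool) → Prop) (w : V) :
    Pr p φ = Pr p (fun x => φ x ∧ x w = true) + Pr p (fun x => φ x ∧ x w = false) := by
  classical
  rw [Pr_eq, Pr_eq, Pr_eq, ← Finset.sum_add_distrib]
  refine Finset.sum_congr rfl fun x _ => ?_
  by_cases h : φ x <;> cases hxw : x w <;> simp [h, hxw]

theorem Pr_split_false {V : Type*} [Fintype V] [DecidableEq V] (p : (V → Bool) → ℝ)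
    (φ : (V → Bool) → Prop) (w : V) :
    Pr p (fun x => φ x ∧ x w = false) = Pr p φ - Pr p (fun x => φ x ∧ x w = true) := by
  have := Pr_split p φ w; linarith

/-- peel one `false`-constraint, with an extra rider predicate ψ. -/
theorem Pr_ins {V : Type*} [Fintype V] [DecidableEq V] (p : (V → Bool) → ℝ)
    (S W : Finset V) (w : V) (ψ : (V → Bool) → Prop) :
    Pr p (fun x => ((∀ v ∈ S, x v = true) ∧ (∀ v ∈ insert w W, x v = false)) ∧ ψ x) =
      Pr p (fun x => ((∀ v ∈ S, x v = true) ∧ (∀ v ∈ W, x v = false)) ∧ ψ x) -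
      Pr p (fun x => ((∀ v ∈ insert w S, x v = true) ∧ (∀ v ∈ W, x v = false)) ∧ ψ x) := by
  have h := Pr_split_false p (fun x => ((∀ v ∈ S, x v = true) ∧ (∀ v ∈ W, x v = false)) ∧ ψ x) w
  calc Pr p (fun x => ((∀ v ∈ S, x v = true) ∧ (∀ v ∈ insert w W, x v = false)) ∧ ψ x)
      = Pr p (fun x => (((∀ v ∈ S, x v = true) ∧ (∀ v ∈ W, x v = false)) ∧ ψ x) ∧ x w = false) := by
        refine Pr_congr p fun x => ?_
        simp only [Finset.forall_mem_insert]; tauto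
    _ = Pr p (fun x => ((∀ v ∈ S, x v = true) ∧ (∀ v ∈ W, x v = false)) ∧ ψ x) -
        Pr p (fun x => (((∀ v ∈ S, x v = true) ∧ (∀ v ∈ W, x v = false)) ∧ ψ x) ∧ x w = true) := h
    _ = _ := by
        congr 1
        refine Pr_congr p fun x => ?_
        simp only [Finset.forall_mem_insert]; tauto

/-- same without rider. -/
theorem Pr_ins' {V : Type*} [Fintype V] [DecidableEq V] (p : (V → Bool) → ℝ)
    (S W : Finset V) (w : V) :
    Pr p (fun x => (∀ v ∈ S, x v = true) ∧ (∀ v ∈ insert w W, x v = false)) =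
      Pr p (fun x => (∀ v ∈ S, x v = true) ∧ (∀ v ∈ W, x v = false)) -
      Pr p (fun x => (∀ v ∈ insert w S, x v = true) ∧ (∀ v ∈ W, x v = false)) := by
  have h := Pr_ins p S W w (fun _ => True)
  simpa using h

theorem key_bwd {V : Type*} [Fintype V] [DecidableEq V] (p : (V → Bool) → ℝ)
    (A B : Finset V)
    (hfact : ∀ A' ⊆ A, ∀ B' ⊆ B, mob p (A' ∪ B') = mob p A' * mob p B') :
    ∀ W : Finset V, W ⊆ A → ∀ S ⊆ A, ∀ W' : Finset V, W' ⊆ B → ∀ S' ⊆ B,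
      Pr p (fun x => ((∀ v ∈ S, x v = true) ∧ (∀ v ∈ W, x v = false)) ∧
          ((∀ v ∈ S', x v = true) ∧ (∀ v ∈ W', x v = false))) =
        Pr p (fun x => (∀ v ∈ S, x v = true) ∧ (∀ v ∈ W, x v = false)) *
        Pr p (fun x => (∀ v ∈ S', x v = true) ∧ (∀ v ∈ W', x v = false)) := by
  -- first the W = ∅ case, by induction on W'
  have base : ∀ W' : Finset V, W' ⊆ B → ∀ S ⊆ A, ∀ S' ⊆ B,
      Pr p (fun x => ((∀ v ∈ S, x v = true) ∧ (∀ v ∈ S', x v = true) ∧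
          (∀ v ∈ W', x v = false))) =
        Pr p (fun x => ∀ v ∈ S, x v = true) *
        Pr p (fun x => (∀ v ∈ S', x v = true) ∧ (∀ v ∈ W', x v = false)) := by
    intro W'
    induction W' using Finset.induction_on with
    | empty =>
      intro _ S hS S' hS'
      have h1 : Pr p (fun x => (∀ v ∈ S, x v = true) ∧ (∀ v ∈ S', x v = true) ∧
          (∀ v ∈ (∅ : Finset V), x v = false)) = mob p (S ∪ S') := by
        refine Pr_congr p fun x => ?_
        simp [Finset.mem_union, or_imp, forall_and]
      have h2 : Pr p (fun x => (∀ v ∈ S', x v = true) ∧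
          (∀ v ∈ (∅ : Finset V), x v = false)) = mob p S' := by
        refine Pr_congr p fun x => ?_; simp [mob]
      rw [h1, h2, hfact S hS S' hS']; rfl
    | @insert w W' hw ih =>
      intro hIns S hS S' hS'
      have hWsub : W' ⊆ B := (Finset.insert_subset_iff.mp hIns).2
      have hwB : w ∈ B := (Finset.insert_subset_iff.mp hIns).1
      have e1 := Pr_ins p S' W' w (fun _ => True)
      -- rewrite our event to a "rider" shape to use Pr_ins with ψ being the S-part
      have L : Pr p (fun x => (∀ v ∈ S, x v = true) ∧ (∀ v ∈ S', x v = true) ∧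
            (∀ v ∈ insert w W', x v = false)) =
          Pr p (fun x => ((∀ v ∈ S', x v = true) ∧ (∀ v ∈ insert w W', x v = false)) ∧
            (∀ v ∈ S, x v = true)) := Pr_congr p fun x => by tauto
      rw [L, Pr_ins p S' W' w]
      have r1 : Pr p (fun x => ((∀ v ∈ S', x v = true) ∧ (∀ v ∈ W', x v = false)) ∧
            (∀ v ∈ S, x v = true)) =
          Pr p (fun x => (∀ v ∈ S, x v = true) ∧ (∀ v ∈ S', x v = true) ∧
            (∀ v ∈ W', x v = false)) := Pr_congr p fun x => by tauto
      have r2 : Pr p (fun x => ((∀ v ∈ insert w S', x v = true) ∧ (∀ v ∈ W', x v = false)) ∧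
            (∀ v ∈ S, x v = true)) =
          Pr p (fun x => (∀ v ∈ S, x v = true) ∧ (∀ v ∈ insert w S', x v = true) ∧
            (∀ v ∈ W', x v = false)) := Pr_congr p fun x => by tauto
      rw [r1, r2, ih hWsub S hS S' hS',
        ih hWsub S hS (insert w S') (Finset.insert_subset hwB hS'),
        Pr_ins' p S' W' w]
      ring
  intro W
  induction W using Finset.induction_on with
  | empty =>
    intro _ S hS W' hW' S' hS'
    have L : Pr p (fun x => ((∀ v ∈ S, x v = true) ∧ (∀ v ∈ (∅ : Finset V), x v = false)) ∧
          (∀ v ∈ S', x v = true) ∧ (∀ v ∈ W', x v = false)) =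
        Pr p (fun x => (∀ v ∈ S, x v = true) ∧ (∀ v ∈ S', x v = true) ∧
          (∀ v ∈ W', x v = false)) := Pr_congr p fun x => by simp
    have R : Pr p (fun x => (∀ v ∈ S, x v = true) ∧ (∀ v ∈ (∅ : Finset V), x v = false)) =
        Pr p (fun x => ∀ v ∈ S, x v = true) := Pr_congr p fun x => by simp
    rw [L, R]; exact base W' hW' S hS S' hS'
  | @insert w W hw ih =>
    intro hIns S hS W' hW' S' hS'
    have hWsub : W ⊆ A := (Finset.insert_subset_iff.mp hIns).2
    have hwA : w ∈ A := (Finset.insert_subset_iff.mp hIns).1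
    rw [Pr_ins p S W w, Pr_ins' p S W w,
      ih hWsub S hS W' hW' S' hS',
      ih hWsub (insert w S) (Finset.insert_subset hwA hS) W' hW' S' hS']
    ring

theorem key_fwd {V : Type*} [Fintype V] [DecidableEq V] (p : (V → Bool) → ℝ)
    (A B : Finset V) (hAB : Disjoint A B)
    (hind : ∀ a b : V → Bool,
        Pr p (fun x => (∀ v ∈ A, x v = a v) ∧ (∀ v ∈ B, x v = b v)) =
          Pr p (fun x => ∀ v ∈ A, x v = a v) * Pr p (fun x => ∀ v ∈ B, x v = b v)) :
    ∀ W : Finset V, ∀ a b : V → Bool,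
      Pr p (fun x => (∀ v ∈ A, v ∉ W → x v = a v) ∧ (∀ v ∈ B, v ∉ W → x v = b v)) =
        Pr p (fun x => ∀ v ∈ A, v ∉ W → x v = a v) *
        Pr p (fun x => ∀ v ∈ B, v ∉ W → x v = b v) := by
  intro W
  induction W using Finset.induction_on with
  | empty =>
    intro a b
    have e1 : ∀ (C : Finset V) (c : V → Bool) (x : V → Bool),
        (∀ v ∈ C, v ∉ (∅ : Finset V) → x v = c v) ↔ (∀ v ∈ C, x v = c v) := by
      intro C c x; simp
    rw [Pr_congr p (fun x => and_congr (e1 A a x) (e1 B b x)),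
      Pr_congr p (e1 A a), Pr_congr p (e1 B b)]
    exact hind a b
  | @insert w W hw ih =>
    intro a b
    by_cases hwA : w ∈ A
    · have hwB : w ∉ B := Finset.disjoint_left.mp hAB hwA
      have iffA : ∀ (c : Bool) (x : V → Bool),
          ((∀ v ∈ A, v ∉ insert w W → x v = a v) ∧ x w = c) ↔
            (∀ v ∈ A, v ∉ W → x v = Function.update a w c v) := by
        intro c x
        constructor
        · rintro ⟨h1, h2⟩ v hv hvW
          by_cases hvw : v = w
          · subst hvw; simpa [Function.update_self] using h2
          · rw [Function.update_of_ne hvw]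
            exact h1 v hv (by simp [Finset.mem_insert, hvw, hvW])
        · intro h
          constructor
          · intro v hv hvW
            have hvw : v ≠ w := fun h' => hvW (h' ▸ Finset.mem_insert_self w W)
            have := h v hv (fun h' => hvW (Finset.mem_insert_of_mem h'))
            rwa [Function.update_of_ne hvw] at this
          · have := h w hwA hw
            simpa [Function.update_self] using this
      have iffB : ∀ x : V → Bool,
          (∀ v ∈ B, v ∉ insert w W → x v = b v) ↔ (∀ v ∈ B, v ∉ W → x v = b v) := by
        intro x
        constructor
        · intro h v hv hvW
          exact h v hv (by
            simp only [Finset.mem_insert, not_or]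
            exact ⟨fun h' => hwB (h' ▸ hv), hvW⟩)
        · intro h v hv hvW
          exact h v hv (fun h' => hvW (Finset.mem_insert_of_mem h'))
      have splitJ := Pr_split p
        (fun x => (∀ v ∈ A, v ∉ insert w W → x v = a v) ∧ (∀ v ∈ B, v ∉ insert w W → x v = b v)) w
      have splitA := Pr_split p (fun x => ∀ v ∈ A, v ∉ insert w W → x v = a v) w
      have cJ : ∀ c : Bool,
          Pr p (fun x => ((∀ v ∈ A, v ∉ insert w W → x v = a v) ∧
              (∀ v ∈ B, v ∉ insert w W → x v = b v)) ∧ x w = c) =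
            Pr p (fun x => (∀ v ∈ A, v ∉ W → x v = Function.update a w c v) ∧
              (∀ v ∈ B, v ∉ W → x v = b v)) := by
        intro c
        refine Pr_congr p fun x => ?_
        rw [← iffA c x, iffB x]; tauto
      have cA : ∀ c : Bool,
          Pr p (fun x => (∀ v ∈ A, v ∉ insert w W → x v = a v) ∧ x w = c) =
            Pr p (fun x => ∀ v ∈ A, v ∉ W → x v = Function.update a w c v) :=
        fun c => Pr_congr p (iffA c)
      have cB : Pr p (fun x => ∀ v ∈ B, v ∉ insert w W → x v = b v) =
          Pr p (fun x => ∀ v ∈ B, v ∉ W → x v = b v) := Pr_congr p iffB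
      rw [splitJ, cJ true, cJ false, ih (Function.update a w true) b,
        ih (Function.update a w false) b, splitA, cA true, cA false, cB]
      ring
    · by_cases hwB : w ∈ B
      · have hwA' : w ∉ A := Finset.disjoint_right.mp hAB hwB
        have iffB : ∀ (c : Bool) (x : V → Bool),
            ((∀ v ∈ B, v ∉ insert w W → x v = b v) ∧ x w = c) ↔
              (∀ v ∈ B, v ∉ W → x v = Function.update b w c v) := by
          intro c x
          constructor
          · rintro ⟨h1, h2⟩ v hv hvW
            by_cases hvw : v = w
            · subst hvw; simpa [Function.update_self] using h2
            · rw [Function.update_of_ne hvw]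
              exact h1 v hv (by simp [Finset.mem_insert, hvw, hvW])
          · intro h
            constructor
            · intro v hv hvW
              have hvw : v ≠ w := fun h' => hvW (h' ▸ Finset.mem_insert_self w W)
              have := h v hv (fun h' => hvW (Finset.mem_insert_of_mem h'))
              rwa [Function.update_of_ne hvw] at this
            · have := h w hwB hw
              simpa [Function.update_self] using this
        have iffA : ∀ x : V → Bool,
            (∀ v ∈ A, v ∉ insert w W → x v = a v) ↔ (∀ v ∈ A, v ∉ W → x v = a v) := by
          intro x
          constructor
          · intro h v hv hvW
            exact h v hv (by
              simp only [Finset.mem_insert, not_or]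
              exact ⟨fun h' => hwA (h' ▸ hv), hvW⟩)
          · intro h v hv hvW
            exact h v hv (fun h' => hvW (Finset.mem_insert_of_mem h'))
        have splitJ := Pr_split p
          (fun x => (∀ v ∈ A, v ∉ insert w W → x v = a v) ∧ (∀ v ∈ B, v ∉ insert w W → x v = b v)) w
        have splitB := Pr_split p (fun x => ∀ v ∈ B, v ∉ insert w W → x v = b v) w
        have cJ : ∀ c : Bool,
            Pr p (fun x => ((∀ v ∈ A, v ∉ insert w W → x v = a v) ∧
                (∀ v ∈ B, v ∉ insert w W → x v = b v)) ∧ x w = c) =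
              Pr p (fun x => (∀ v ∈ A, v ∉ W → x v = a v) ∧
                (∀ v ∈ B, v ∉ W → x v = Function.update b w c v)) := by
          intro c
          refine Pr_congr p fun x => ?_
          rw [← iffB c x, iffA x]; tauto
        have cB : ∀ c : Bool,
            Pr p (fun x => (∀ v ∈ B, v ∉ insert w W → x v = b v) ∧ x w = c) =
              Pr p (fun x => ∀ v ∈ B, v ∉ W → x v = Function.update b w c v) :=
          fun c => Pr_congr p (iffB c)
        have cA : Pr p (fun x => ∀ v ∈ A, v ∉ insert w W → x v = a v) =
            Pr p (fun x => ∀ v ∈ A, v ∉ W → x v = a v) := Pr_congr p iffA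
        rw [splitJ, cJ true, cJ false, ih a (Function.update b w true),
          ih a (Function.update b w false), splitB, cB true, cB false, cA]
        ring
      · -- w in neither A nor B: events unchanged
        have iffC : ∀ (C : Finset V) (c : V → Bool), w ∉ C → ∀ x : V → Bool,
            (∀ v ∈ C, v ∉ insert w W → x v = c v) ↔ (∀ v ∈ C, v ∉ W → x v = c v) := by
          intro C c hwC x
          constructor
          · intro h v hv hvW
            exact h v hv (by
              simp only [Finset.mem_insert, not_or]
              exact ⟨fun h' => hwC (h' ▸ hv), hvW⟩)
          · intro h v hv hvW
            exact h v hv (fun h' => hvW (Finset.mem_insert_of_mem h'))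
        rw [Pr_congr p (fun x => and_congr (iffC A a hwA x) (iffC B b hwB x)),
          Pr_congr p (iffC A a hwA), Pr_congr p (iffC B b hwB)]
        exact ih a b

/-- for a strictly positive multivariate Bernoulli vector `X_V` and
disjoint nonempty proper subsets `A, B` of `V`, the subvectors `X_A` and `X_B` are
independent if and only if `μ_{A'∪B'} = μ_{A'}·μ_{B'}` for all `A' ⊆ A`, `B' ⊆ B`. -/
theorem stmt3 {V : Type*} [Fintype V] [DecidableEq V]
    (p : (V → Bool) → ℝ) (hp : ∀ x, 0 < p x) (hsum : ∑ x, p x = 1)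
    (A B : Finset V) (hAB : Disjoint A B) (hA : A.Nonempty) (hB : B.Nonempty)
    (hA' : A ≠ Finset.univ) (hB' : B ≠ Finset.univ) :
    (∀ a b : V → Bool,
        Pr p (fun x => (∀ v ∈ A, x v = a v) ∧ (∀ v ∈ B, x v = b v)) =
          Pr p (fun x => ∀ v ∈ A, x v = a v) * Pr p (fun x => ∀ v ∈ B, x v = b v)) ↔
      (∀ A' ⊆ A, ∀ B' ⊆ B, mob p (A' ∪ B') = mob p A' * mob p B') := by

  classical
  constructor
  · -- independence → Möbius factorization
    intro hind A' hA'sub B' hB'sub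
    set W : Finset V := (A \ A') ∪ (B \ B') with hW
    have memA : ∀ v ∈ A, (v ∉ W ↔ v ∈ A') := by
      intro v hv
      constructor
      · intro hvW
        by_contra hn
        exact hvW (Finset.mem_union_left _ (Finset.mem_sdiff.mpr ⟨hv, hn⟩))
      · intro hvA' hvW
        rcases Finset.mem_union.mp hvW with h | h
        · exact (Finset.mem_sdiff.mp h).2 hvA'
        · exact Finset.disjoint_left.mp hAB hv (Finset.mem_sdiff.mp h).1
    have memB : ∀ v ∈ B, (v ∉ W ↔ v ∈ B') := by
      intro v hv
      constructor
      · intro hvW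
        by_contra hn
        exact hvW (Finset.mem_union_right _ (Finset.mem_sdiff.mpr ⟨hv, hn⟩))
      · intro hvB' hvW
        rcases Finset.mem_union.mp hvW with h | h
        · exact Finset.disjoint_right.mp hAB hv (Finset.mem_sdiff.mp h).1
        · exact (Finset.mem_sdiff.mp h).2 hvB'
    have iffA : ∀ x : V → Bool,
        (∀ v ∈ A, v ∉ W → x v = (fun _ => true) v) ↔ (∀ v ∈ A', x v = true) := by
      intro x
      constructor
      · intro h v hv
        exact h v (hA'sub hv) ((memA v (hA'sub hv)).mpr hv)
      · intro h v hvA hvW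
        exact h v ((memA v hvA).mp hvW)
    have iffB : ∀ x : V → Bool,
        (∀ v ∈ B, v ∉ W → x v = (fun _ => true) v) ↔ (∀ v ∈ B', x v = true) := by
      intro x
      constructor
      · intro h v hv
        exact h v (hB'sub hv) ((memB v (hB'sub hv)).mpr hv)
      · intro h v hvB hvW
        exact h v ((memB v hvB).mp hvW)
    have hkey := key_fwd p A B hAB hind W (fun _ => true) (fun _ => true)
    rw [Pr_congr p (fun x => and_congr (iffA x) (iffB x)),
      Pr_congr p iffA, Pr_congr p iffB] at hkey
    have mU : mob p (A' ∪ B') =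
        Pr p (fun x => (∀ v ∈ A', x v = true) ∧ (∀ v ∈ B', x v = true)) := by
      refine Pr_congr p fun x => ?_
      simp [Finset.mem_union, or_imp, forall_and]
    rw [mU, mob, mob]
    exact hkey
  · -- Möbius factorization → independence
    intro hfact a b
    have split : ∀ (C : Finset V) (c : V → Bool) (x : V → Bool),
        (∀ v ∈ C, x v = c v) ↔
          ((∀ v ∈ C.filter (fun v => c v = true), x v = true) ∧
           (∀ v ∈ C.filter (fun v => c v = false), x v = false)) := by
      intro C c x
      constructor
      · intro h
        constructor
        · intro v hv
          rw [h v (Finset.mem_filter.mp hv).1]; exact (Finset.mem_filter.mp hv).2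
        · intro v hv
          rw [h v (Finset.mem_filter.mp hv).1]; exact (Finset.mem_filter.mp hv).2
      · rintro ⟨h1, h2⟩ v hv
        cases hcv : c v with
        | true => exact h1 v (Finset.mem_filter.mpr ⟨hv, hcv⟩)
        | false => exact h2 v (Finset.mem_filter.mpr ⟨hv, hcv⟩)
    have hkey := key_bwd p A B hfact
      (A.filter (fun v => a v = false)) (Finset.filter_subset _ _)
      (A.filter (fun v => a v = true)) (Finset.filter_subset _ _)
      (B.filter (fun v => b v = false)) (Finset.filter_subset _ _)
      (B.filter (fun v => b v = true)) (Finset.filter_subset _ _)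
    rw [Pr_congr p (fun x => and_congr (split A a x) (split B b x)),
      Pr_congr p (split A a), Pr_congr p (split B b)]
    exact hkey
end

section
/- Let X_V be a vector of binary variables with strictly positive joint probability, Möbius parameter μ, and LML parameter γ_U = Σ_{E⊆U} (-1)^{|U\E|} log μ_E. For disjoint nonempty proper subsets A, B of V, the condition μ_{A'∪B'} = μ_{A'}·μ_{B'} for all A' ⊆ A, B' ⊆ B is equivalent to γ_{A'∪B'} = 0 for all nonempty A' ⊆ A and nonempty B' ⊆ B. -/
open Finset

/-- Log-mean linear parameter: `γ_U = ∑_{E ⊆ U} (-1)^{|U\E|} log μ_E`. -/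
noncomputable def lml {V : Type*} [Fintype V] [DecidableEq V]
    (p : (V → Bool) → ℝ) (U : Finset V) : ℝ :=
  ∑ E ∈ U.powerset, (-1 : ℝ) ^ (U \ E).card * Real.log (mob p E)

section Aux

variable {V : Type*} [Fintype V] [DecidableEq V]

lemma mob_pos (p : (V → Bool) → ℝ) (hp : ∀ x, 0 < p x) (U : Finset V) : 0 < mob p U := by
  classical
  unfold mob Pr
  apply Finset.sum_pos (fun x _ => hp x)
  exact ⟨fun _ => true, by simp⟩

lemma mob_empty (p : (V → Bool) → ℝ) (hsum : ∑ x, p x = 1) : mob p (∅ : Finset V) = 1 := by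
  unfold mob Pr
  simpa using hsum

lemma alt_sum_card {α : Type*} [DecidableEq α] (s : Finset α) (hs : s.Nonempty) :
    ∑ t ∈ s.powerset, (-1 : ℝ) ^ t.card = 0 := by
  exact_mod_cast Finset.sum_powerset_neg_one_pow_card_of_nonempty hs

lemma sdiff_pow {α : Type*} [DecidableEq α] {s t : Finset α} (h : t ⊆ s) :
    (-1 : ℝ) ^ (s \ t).card = (-1) ^ s.card * (-1) ^ t.card := by
  have hc : (s \ t).card + t.card = s.card := Finset.card_sdiff_add_card_eq_card h
  have : (-1 : ℝ) ^ s.card * (-1) ^ t.card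
      = (-1) ^ (s \ t).card * ((-1) ^ (t.card + t.card)) := by
    rw [← hc, pow_add, pow_add]; ring
  rw [this, Even.neg_one_pow ⟨t.card, rfl⟩, mul_one]

lemma union_inter_left {α : Type*} [DecidableEq α] {A B a b : Finset α} (h : Disjoint A B)
    (ha : a ⊆ A) (hb : b ⊆ B) : (a ∪ b) ∩ A = a := by
  have h1 : b ∩ A = ∅ := by
    rw [← Finset.disjoint_iff_inter_eq_empty]
    exact Disjoint.mono_left hb h.symm
  rw [Finset.union_inter_distrib_right, Finset.inter_eq_left.2 ha, h1, Finset.union_empty]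

lemma sum_powerset_union {α : Type*} [DecidableEq α] {A B : Finset α} (h : Disjoint A B)
    (f : Finset α → ℝ) :
    ∑ E ∈ (A ∪ B).powerset, f E = ∑ P ∈ A.powerset ×ˢ B.powerset, f (P.1 ∪ P.2) := by
  apply Finset.sum_nbij' (fun E => (E ∩ A, E ∩ B)) (fun P => P.1 ∪ P.2)
  · intro E hE
    simp only [Finset.mem_product, Finset.mem_powerset]
    exact ⟨Finset.inter_subset_right, Finset.inter_subset_right⟩
  · intro P hP
    simp only [Finset.mem_product, Finset.mem_powerset] at hP ⊢
    exact Finset.union_subset_union hP.1 hP.2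
  · intro E hE
    rw [Finset.mem_powerset] at hE
    simp only
    rw [← Finset.inter_union_distrib_left, Finset.inter_eq_left.2 hE]
  · rintro ⟨a, b⟩ hP
    simp only [Finset.mem_product, Finset.mem_powerset] at hP
    simp only [Prod.mk.injEq]
    exact ⟨union_inter_left h hP.1 hP.2, by
      rw [Finset.union_comm]; exact union_inter_left h.symm hP.2 hP.1⟩
  · intro E hE
    rw [Finset.mem_powerset] at hE
    simp only
    rw [← Finset.inter_union_distrib_left, Finset.inter_eq_left.2 hE]

lemma sum_superset_sign {α : Type*} [DecidableEq α] {U F : Finset α} (hF : F ⊆ U) :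
    ∑ E ∈ U.powerset.filter (fun E => F ⊆ E), (-1 : ℝ) ^ (E \ F).card
      = if F = U then 1 else 0 := by
  have key : ∑ E ∈ U.powerset.filter (fun E => F ⊆ E), (-1 : ℝ) ^ (E \ F).card
      = ∑ G ∈ (U \ F).powerset, (-1 : ℝ) ^ G.card := by
    apply Finset.sum_nbij' (fun E => E \ F) (fun G => G ∪ F)
    · intro E hE
      simp only [Finset.mem_filter, Finset.mem_powerset] at hE
      exact Finset.mem_powerset.2 (Finset.sdiff_subset_sdiff hE.1 (le_refl F))
    · intro G hG
      rw [Finset.mem_powerset] at hG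
      simp only [Finset.mem_filter, Finset.mem_powerset]
      exact ⟨Finset.union_subset (hG.trans (Finset.sdiff_subset)) hF,
        Finset.subset_union_right⟩
    · intro E hE
      simp only [Finset.mem_filter, Finset.mem_powerset] at hE
      exact Finset.sdiff_union_of_subset hE.2
    · intro G hG
      rw [Finset.mem_powerset] at hG
      rw [Finset.union_sdiff_right]
      exact Finset.sdiff_eq_self_of_disjoint
        (Finset.disjoint_of_subset_left hG Finset.sdiff_disjoint)
    · intro E hE; rfl
  rw [key]
  have : ∑ G ∈ (U \ F).powerset, (-1 : ℝ) ^ G.card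
      = ((∑ G ∈ (U \ F).powerset, (-1 : ℤ) ^ G.card : ℤ) : ℝ) := by push_cast; rfl
  rw [this, Finset.sum_powerset_neg_one_pow_card]
  by_cases hFU : F = U
  · simp [hFU]
  · have : U \ F ≠ ∅ := by
      intro hcon
      exact hFU (Finset.Subset.antisymm hF (Finset.sdiff_eq_empty_iff_subset.1 hcon))
    simp [this, hFU]

lemma lml_inversion (p : (V → Bool) → ℝ) (U : Finset V) :
    ∑ E ∈ U.powerset, lml p E = Real.log (mob p U) := by
  unfold lml
  rw [Finset.sum_comm' (t' := U.powerset)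
    (s' := fun F => U.powerset.filter (fun E => F ⊆ E))
    (f := fun E F => (-1 : ℝ) ^ (E \ F).card * Real.log (mob p F))
    (fun E F => by
      simp only [Finset.mem_powerset, Finset.mem_filter, Finset.mem_powerset]
      constructor
      · rintro ⟨h1, h2⟩; exact ⟨⟨h1, h2⟩, h2.trans h1⟩
      · rintro ⟨⟨h1, h2⟩, h3⟩; exact ⟨h1, h2⟩)]
  rw [Finset.sum_congr rfl (fun F hF => by
    rw [← Finset.sum_mul, sum_superset_sign (Finset.mem_powerset.1 hF)])]
  simp [Finset.sum_ite_eq' U.powerset U (fun _ => Real.log (mob p U))]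

lemma alt_sum_sdiff {α : Type*} [DecidableEq α] (s : Finset α) (hs : s.Nonempty) :
    ∑ t ∈ s.powerset, (-1 : ℝ) ^ (s \ t).card = 0 := by
  rw [Finset.sum_congr rfl (fun t ht => sdiff_pow (Finset.mem_powerset.1 ht)),
    ← Finset.mul_sum, alt_sum_card s hs, mul_zero]

lemma lml_empty (p : (V → Bool) → ℝ) (hsum : ∑ x, p x = 1) : lml p (∅ : Finset V) = 0 := by
  unfold lml
  simp [mob_empty p hsum]

end Aux

/-- for a strictly positive multivariate Bernoulli vector `X_V` and
disjoint nonempty proper subsets `A, B` of `V`, the factorization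
`μ_{A'∪B'} = μ_{A'}·μ_{B'}` for all `A' ⊆ A`, `B' ⊆ B` is equivalent to
`γ_{A'∪B'} = 0` for all nonempty `A' ⊆ A` and nonempty `B' ⊆ B`. -/
theorem stmt4 {V : Type*} [Fintype V] [DecidableEq V]
    (p : (V → Bool) → ℝ) (hp : ∀ x, 0 < p x) (hsum : ∑ x, p x = 1)
    (A B : Finset V) (hAB : Disjoint A B) (hA : A.Nonempty) (hB : B.Nonempty)
    (hA' : A ≠ Finset.univ) (hB' : B ≠ Finset.univ) :
    (∀ A' ⊆ A, ∀ B' ⊆ B, mob p (A' ∪ B') = mob p A' * mob p B') ↔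
      (∀ A' ⊆ A, ∀ B' ⊆ B, A'.Nonempty → B'.Nonempty → lml p (A' ∪ B') = 0) := by
  constructor
  · -- factorization implies vanishing lml
    intro hfac A' hA'sub B' hB'sub hA'ne hB'ne
    have hd' : Disjoint A' B' := hAB.mono hA'sub hB'sub
    unfold lml
    rw [sum_powerset_union hd'
      (fun E => (-1 : ℝ) ^ ((A' ∪ B') \ E).card * Real.log (mob p E)),
      Finset.sum_product]
    have hterm : ∀ a ∈ A'.powerset, ∀ b ∈ B'.powerset,
        (-1 : ℝ) ^ ((A' ∪ B') \ (a ∪ b)).card * Real.log (mob p (a ∪ b))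
        = ((-1 : ℝ) ^ (A' \ a).card * (-1 : ℝ) ^ (B' \ b).card)
          * (Real.log (mob p a) + Real.log (mob p b)) := by
      intro a ha b hb
      rw [Finset.mem_powerset] at ha hb
      have hset : (A' ∪ B') \ (a ∪ b) = (A' \ a) ∪ (B' \ b) := by
        ext x
        simp only [Finset.mem_sdiff, Finset.mem_union, not_or]
        constructor
        · rintro ⟨hx, hxa, hxb⟩
          rcases hx with h | h
          · exact Or.inl ⟨h, hxa⟩
          · exact Or.inr ⟨h, hxb⟩
        · rintro (⟨h1, h2⟩ | ⟨h1, h2⟩)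
          · exact ⟨Or.inl h1, h2, fun hxb => Finset.disjoint_left.1 hd' h1 (hb hxb)⟩
          · exact ⟨Or.inr h1, fun hxa => Finset.disjoint_left.1 hd' (ha hxa) h1, h2⟩
      have hdisj : Disjoint (A' \ a) (B' \ b) :=
        (hd'.mono Finset.sdiff_subset Finset.sdiff_subset)
      rw [hset, Finset.card_union_of_disjoint hdisj, pow_add,
        hfac a (ha.trans hA'sub) b (hb.trans hB'sub),
        Real.log_mul (ne_of_gt (mob_pos p hp a)) (ne_of_gt (mob_pos p hp b))]
    rw [Finset.sum_congr rfl (fun a ha => Finset.sum_congr rfl (fun b hb => hterm a ha b hb))]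
    have hSB : ∑ b ∈ B'.powerset, (-1 : ℝ) ^ (B' \ b).card = 0 := alt_sum_sdiff B' hB'ne
    have hSA : ∑ a ∈ A'.powerset, (-1 : ℝ) ^ (A' \ a).card = 0 := alt_sum_sdiff A' hA'ne
    have split : ∀ a ∈ A'.powerset,
        ∑ b ∈ B'.powerset, ((-1 : ℝ) ^ (A' \ a).card * (-1 : ℝ) ^ (B' \ b).card)
          * (Real.log (mob p a) + Real.log (mob p b))
        = ((-1 : ℝ) ^ (A' \ a).card * Real.log (mob p a))
            * (∑ b ∈ B'.powerset, (-1 : ℝ) ^ (B' \ b).card)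
          + (-1 : ℝ) ^ (A' \ a).card
            * (∑ b ∈ B'.powerset, (-1 : ℝ) ^ (B' \ b).card * Real.log (mob p b)) := by
      intro a ha
      rw [Finset.mul_sum, Finset.mul_sum, ← Finset.sum_add_distrib]
      apply Finset.sum_congr rfl
      intro b hb
      ring
    rw [Finset.sum_congr rfl split]
    rw [Finset.sum_add_distrib]
    have h1 : ∑ a ∈ A'.powerset,
        ((-1 : ℝ) ^ (A' \ a).card * Real.log (mob p a))
          * (∑ b ∈ B'.powerset, (-1 : ℝ) ^ (B' \ b).card) = 0 := by
      rw [hSB]; simp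
    have h2 : ∑ a ∈ A'.powerset,
        (-1 : ℝ) ^ (A' \ a).card
          * (∑ b ∈ B'.powerset, (-1 : ℝ) ^ (B' \ b).card * Real.log (mob p b)) = 0 := by
      rw [← Finset.sum_mul, hSA, zero_mul]
    rw [h1, h2, add_zero]
  · -- vanishing lml implies factorization
    intro hγ A' hA'sub B' hB'sub
    by_cases hAe : A' = ∅
    · subst hAe
      rw [Finset.empty_union, mob_empty p hsum, one_mul]
    by_cases hBe : B' = ∅
    · subst hBe
      rw [Finset.union_empty, mob_empty p hsum, mul_one]
    have hd' : Disjoint A' B' := hAB.mono hA'sub hB'sub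
    have hlog : Real.log (mob p (A' ∪ B'))
        = Real.log (mob p A') + Real.log (mob p B') := by
      rw [← lml_inversion p (A' ∪ B'), sum_powerset_union hd' (lml p), Finset.sum_product]
      have hterm : ∀ a ∈ A'.powerset, ∀ b ∈ B'.powerset,
          lml p (a ∪ b) = (if b = ∅ then lml p a else 0)
            + (if a = ∅ then lml p b else 0) := by
        intro a ha b hb
        rw [Finset.mem_powerset] at ha hb
        by_cases h1 : a = ∅
        · by_cases h2 : b = ∅
          · subst h1; subst h2; simp [lml_empty p hsum]
          · subst h1; simp [h2]
        · by_cases h2 : b = ∅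
          · subst h2; simp [h1]
          · rw [if_neg h1, if_neg h2, add_zero]
            exact hγ a (ha.trans hA'sub) b (hb.trans hB'sub)
              (Finset.nonempty_iff_ne_empty.2 h1) (Finset.nonempty_iff_ne_empty.2 h2)
      rw [Finset.sum_congr rfl (fun a ha => Finset.sum_congr rfl (fun b hb => hterm a ha b hb))]
      have inner : ∀ a ∈ A'.powerset,
          ∑ b ∈ B'.powerset, ((if b = ∅ then lml p a else 0)
            + (if a = ∅ then lml p b else 0))
          = lml p a + (if a = ∅ then Real.log (mob p B') else 0) := by
        intro a ha
        rw [Finset.sum_add_distrib]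
        congr 1
        · rw [Finset.sum_ite_eq' B'.powerset ∅ (fun _ => lml p a)]
          simp
        · split_ifs with h
          · exact lml_inversion p B'
          · simp
      rw [Finset.sum_congr rfl inner, Finset.sum_add_distrib, lml_inversion p A',
        Finset.sum_ite_eq' A'.powerset ∅ (fun _ => Real.log (mob p B'))]
      simp
    have e1 := Real.exp_log (mob_pos p hp (A' ∪ B'))
    rw [hlog, Real.exp_add, Real.exp_log (mob_pos p hp A'),
      Real.exp_log (mob_pos p hp B')] at e1
    exact e1.symm
end

section
/- Let Y_B be a discrete random vector with strictly positive probability table, binary expansion X_{J_B}, and let μ̃ be the Möbius parameter of X_{J_B} (μ̃_K = P(X_K = 1_K) for K ⊆ J_B) and γ̃ its LML parameter. If K = j_D is a primary subset of J_B, then μ̃_{j_D} = μ^{j_D} and γ̃_{j_D} = γ^{j_D}, where μ^{j_D} = P(Y_D = j_D) and γ^{j_D} = Σ_{H⊆D} (-1)^{|D\H|} log μ^{j_H} are the Möbius and LML parameters of Y_B. In particular γ̃_{j_D} is well-defined. If K is non-primary, μ̃_K = 0 and γ̃_K is not well-defined. -/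
open Finset

/-- Möbius parameter `μ̃_K = P(X_K = 1_K)` of the binary expansion, `K ⊆ J_B`
encoded as a finite set of levels `Σ v, I v`. -/
noncomputable def mobExp {B : Type*} [Fintype B] [DecidableEq B] {I : B → Type*}
    [∀ v, Fintype (I v)] (p : (∀ v, I v) → ℝ) (K : Finset (Σ v, I v)) : ℝ :=
  Pr p (fun x => ∀ s ∈ K, x s.1 = s.2)

/-- LML parameter `γ̃_K` of the binary expansion. -/
noncomputable def lmlExp {B : Type*} [Fintype B] [DecidableEq B] {I : B → Type*}
    [∀ v, Fintype (I v)] [∀ v, DecidableEq (I v)]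
    (p : (∀ v, I v) → ℝ) (K : Finset (Σ v, I v)) : ℝ :=
  ∑ E ∈ K.powerset, (-1 : ℝ) ^ (K \ E).card * Real.log (mobExp p E)

/-- Möbius parameter `μ^{j_D} = P(Y_D = j_D)` of `Y_B` itself. -/
noncomputable def mobY {B : Type*} [Fintype B] [DecidableEq B] {I : B → Type*}
    [∀ v, Fintype (I v)] (p : (∀ v, I v) → ℝ) (D : Finset B) (σ : ∀ v, I v) : ℝ :=
  Pr p (fun x => ∀ v ∈ D, x v = σ v)

/-- LML parameter `γ^{j_D} = ∑_{H ⊆ D} (-1)^{|D\H|} log μ^{j_H}` of `Y_B`. -/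
noncomputable def lmlY {B : Type*} [Fintype B] [DecidableEq B] {I : B → Type*}
    [∀ v, Fintype (I v)] (p : (∀ v, I v) → ℝ) (D : Finset B) (σ : ∀ v, I v) : ℝ :=
  ∑ H ∈ D.powerset, (-1 : ℝ) ^ (D \ H).card * Real.log (mobY p H σ)

/-- for a strictly positive discrete vector `Y_B` with baselines
`z`, if `K = j_D` is a primary subset of `J_B` (one non-baseline level `σ v` for
each `v ∈ D`), then `μ̃_{j_D} = μ^{j_D}` and `γ̃_{j_D} = γ^{j_D}`; in particular
`γ̃_{j_D}` is well-defined (all `μ̃_E`, `E ⊆ K`, are positive). If `K` is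
non-primary, then `μ̃_K = 0` (so `γ̃_K` involves `log 0`). -/
theorem stmt14 {B : Type*} [Fintype B] [DecidableEq B] {I : B → Type*}
    [∀ v, Fintype (I v)] [∀ v, DecidableEq (I v)] (z : ∀ v, I v)
    (p : (∀ v, I v) → ℝ) (hp : ∀ x, 0 < p x) (hsum : ∑ x, p x = 1)
    (K : Finset (Σ v, I v)) (hK : ∀ s ∈ K, s.2 ≠ z s.1) :
    (∀ (D : Finset B) (σ : ∀ v, I v), (∀ v ∈ D, σ v ≠ z v) →
      (∀ s : Σ v, I v, s ∈ K ↔ (s.1 ∈ D ∧ s = ⟨s.1, σ s.1⟩)) →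
      (mobExp p K = mobY p D σ ∧
        (∀ E ∈ K.powerset, 0 < mobExp p E) ∧
        lmlExp p K = lmlY p D σ)) ∧
    ((∃ s ∈ K, ∃ t ∈ K, s.1 = t.1 ∧ s ≠ t) → mobExp p K = 0) := by

  constructor
  · intro D σ hσ hKD
    have hf : Function.Injective (fun v : B => (⟨v, σ v⟩ : Σ v, I v)) := by
      intro a b h
      exact congrArg Sigma.fst h
    set f : B ↪ (Σ v, I v) := ⟨fun v => ⟨v, σ v⟩, hf⟩ with hfdef
    have hKmap : K = D.map f := by
      ext s
      rw [hKD s]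
      simp only [Finset.mem_map, hfdef, Function.Embedding.coeFn_mk]
      constructor
      · rintro ⟨h1, h2⟩; exact ⟨s.1, h1, h2.symm⟩
      · rintro ⟨v, hv, rfl⟩; exact ⟨hv, rfl⟩
    have hmob : ∀ H : Finset B, mobExp p (H.map f) = mobY p H σ := by
      intro H
      unfold mobExp mobY Pr
      apply Finset.sum_congr _ (fun _ _ => rfl)
      ext x
      simp only [Finset.mem_filter, Finset.mem_univ, true_and, Finset.mem_map,
        hfdef, Function.Embedding.coeFn_mk]
      constructor
      · intro h v hv; exact h ⟨v, σ v⟩ ⟨v, hv, rfl⟩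
      · rintro h s ⟨v, hv, rfl⟩; exact h v hv
    have hEform : ∀ E : Finset (Σ v, I v), E ⊆ K → (E.image Sigma.fst).map f = E := by
      intro E hE
      ext s
      simp only [Finset.mem_map, Finset.mem_image, hfdef, Function.Embedding.coeFn_mk]
      constructor
      · rintro ⟨v, ⟨t, ht, rfl⟩, rfl⟩
        have h2 := ((hKD t).mp (hE ht)).2
        rw [← h2]; exact ht
      · intro hs
        refine ⟨s.1, ⟨s, hs, rfl⟩, ?_⟩
        exact (((hKD s).mp (hE hs)).2).symm
    refine ⟨?_, ?_, ?_⟩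
    · rw [hKmap, hmob D]
    · intro E hE
      have hEsub : E ⊆ K := Finset.mem_powerset.mp hE
      unfold mobExp Pr
      apply Finset.sum_pos (fun x _ => hp x)
      refine ⟨σ, ?_⟩
      simp only [Finset.mem_filter, Finset.mem_univ, true_and]
      intro s hs
      obtain ⟨a, b⟩ := s
      have h2 := ((hKD ⟨a, b⟩).mp (hEsub hs)).2
      simp only [Sigma.mk.inj_iff, heq_eq_eq, true_and] at h2
      exact h2.symm
    · unfold lmlExp lmlY
      refine Finset.sum_bij' (fun E _ => E.image Sigma.fst) (fun H _ => H.map f)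
        ?_ ?_ ?_ ?_ ?_
      · intro E hE
        rw [Finset.mem_powerset] at hE ⊢
        intro v hv
        simp only [Finset.mem_image] at hv
        obtain ⟨s, hs, rfl⟩ := hv
        exact ((hKD s).mp (hE hs)).1
      · intro H hH
        rw [Finset.mem_powerset] at hH ⊢
        rw [hKmap]
        exact Finset.map_subset_map.mpr hH
      · intro E hE
        exact hEform E (Finset.mem_powerset.mp hE)
      · intro H hH
        ext v
        simp only [Finset.mem_image, Finset.mem_map, hfdef, Function.Embedding.coeFn_mk]
        constructor
        · rintro ⟨s, ⟨w, hw, rfl⟩, rfl⟩; exact hw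
        · intro hv; exact ⟨⟨v, σ v⟩, ⟨v, hv, rfl⟩, rfl⟩
      · intro E hE
        have hEsub : E ⊆ K := Finset.mem_powerset.mp hE
        have h1 : mobY p (E.image Sigma.fst) σ = mobExp p E := by
          rw [← hmob, hEform E hEsub]
        have hHD : E.image Sigma.fst ⊆ D := by
          intro v hv
          simp only [Finset.mem_image] at hv
          obtain ⟨s, hs, rfl⟩ := hv
          exact ((hKD s).mp (hEsub hs)).1
        have hc : (E.image Sigma.fst).card = E.card := by
          conv_rhs => rw [← hEform E hEsub]
          rw [Finset.card_map]
        have hcard : (K \ E).card = (D \ E.image Sigma.fst).card := by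
          rw [Finset.card_sdiff_of_subset hEsub, Finset.card_sdiff_of_subset hHD, hKmap,
            Finset.card_map, hc]
        rw [h1, hcard]
  · rintro ⟨s, hs, t, ht, h1, h2⟩
    unfold mobExp Pr
    apply Finset.sum_eq_zero
    intro x hx
    simp only [Finset.mem_filter, Finset.mem_univ, true_and] at hx
    exfalso
    apply h2
    obtain ⟨a, b⟩ := s
    obtain ⟨c, d⟩ := t
    cases h1
    have h3 := hx ⟨a, b⟩ hs
    have h4 := hx ⟨a, d⟩ ht
    simp only [Sigma.mk.inj_iff, heq_eq_eq, true_and]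
    exact h3.symm.trans h4
end
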